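/- If ρ(Σ) < 1 for a finite set of matrices Σ, then every trajectory of the switched linear system x_{k+1} = A_{σ(k)} x_k converges to zero, for every initial condition x_0 and every switching signal σ: ℕ → ⟨M⟩. -/

import Mathlib

/-!
Eventually the `k`-th roots `N (A_{s_0} ⋯ A_{s_{k-1}}) ^ (1 / k)` lie below some `r < 1` uniformly
in the word `s` (the `limsup` hypothesis says something only because submultiplicativity keeps
these roots bounded: the `limsup` of an unbounded real sequence is `0`). So every product of
length `k`, in particular the one driving the trajectory, has `N`-norm at most `r ^ k`, and since
all norms on a finite-dimensional space are equivalent, these products tend to zero.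
-/

open Filter Topology

-- `E` with only its linear structure, so that a second norm can be installed on it.
def LinearCopy (E : Type*) : Type _ := E

instance {E : Type*} [AddCommGroup E] : AddCommGroup (LinearCopy E) := ‹AddCommGroup E›

instance {E : Type*} [AddCommGroup E] [Module ℝ E] : Module ℝ (LinearCopy E) := ‹Module ℝ E›

instance {E : Type*} [AddCommGroup E] [Module ℝ E] [FiniteDimensional ℝ E] :
    FiniteDimensional ℝ (LinearCopy E) := ‹FiniteDimensional ℝ E›

theorem tendsto_zero_of_tendsto_norm_zero {E : Type*} [AddCommGroup E] [Module ℝ E]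
    [TopologicalSpace E] [IsTopologicalAddGroup E] [ContinuousSMul ℝ E] [FiniteDimensional ℝ E]
    (N : E → ℝ) (hnonneg : ∀ x, 0 ≤ N x) (hdef : ∀ x, N x = 0 ↔ x = 0)
    (htri : ∀ x y, N (x + y) ≤ N x + N y) (hhom : ∀ (c : ℝ) x, N (c • x) = |c| * N x)
    {α : Type*} {l : Filter α} {u : α → E} (hu : Tendsto (fun a => N (u a)) l (𝓝 0)) :
    Tendsto u l (𝓝 0) := by
  let : Norm (LinearCopy E) := ⟨N⟩
  have core : NormedSpace.Core ℝ (LinearCopy E) := ⟨⟨hnonneg, hhom, htri⟩, hdef⟩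
  let := NormedAddCommGroup.ofCore core
  let := NormedSpace.ofCore core
  have hid := (LinearMap.id : E →ₗ[ℝ] E).continuous_of_finiteDimensional (E := LinearCopy E)
  have hu' : Tendsto (β := LinearCopy E) u l (𝓝 0) := tendsto_zero_iff_norm_tendsto_zero.2 hu
  exact (hid.tendsto 0).comp hu'

theorem List.apply_prod_le_pow_length {R : Type*} [Monoid R] {N : R → ℝ}
    (hnonneg : ∀ a, 0 ≤ N a) (hsub : ∀ a b, N (a * b) ≤ N a * N b) {C : ℝ} (hC : 0 ≤ C)
    {l : List R} (hl : l ≠ []) (hlC : ∀ a ∈ l, N a ≤ C) : N l.prod ≤ C ^ l.length := by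
  induction l with
  | nil => exact absurd rfl hl
  | cons a l ih =>
    rcases eq_or_ne l [] with rfl | hl'
    · simpa using hlC a (by simp)
    calc N (a :: l).prod ≤ N a * N l.prod := by rw [List.prod_cons]; exact hsub _ _
    _ ≤ C * C ^ l.length :=
        mul_le_mul (hlC a (by simp)) (ih hl' fun b hb => hlC b (by simp [hb])) (hnonneg _) hC
    _ = C ^ (a :: l).length := by rw [List.length_cons, pow_succ']

section JointSpectralRadius

variable {R ι : Type*} [Monoid R] (N : R → ℝ) (A : ι → R)

-- The joint spectral radius measured with `N` is the `limsup` of this sequence.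
noncomputable def jsrApprox (k : ℕ) : ℝ :=
  ⨆ s : Fin k → ι, N (List.ofFn fun i => A (s i)).prod ^ ((1 : ℝ) / k)

variable {N A}

theorem jsrApprox_nonneg (hnonneg : ∀ a, 0 ≤ N a) (k : ℕ) : 0 ≤ jsrApprox N A k :=
  Real.iSup_nonneg fun _ => Real.rpow_nonneg (hnonneg _) _

theorem jsrApprox_le (hnonneg : ∀ a, 0 ≤ N a) (hsub : ∀ a b, N (a * b) ≤ N a * N b) {C : ℝ}
    (hC : 0 ≤ C) (hAC : ∀ i, N (A i) ≤ C) {k : ℕ} (hk : k ≠ 0) : jsrApprox N A k ≤ C := by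
  refine Real.iSup_le (fun s => ?_) hC
  have hprod : N (List.ofFn fun i => A (s i)).prod ≤ C ^ k := by
    simpa using List.apply_prod_le_pow_length (l := List.ofFn fun i => A (s i)) hnonneg hsub hC
      (by simpa using hk)
      (by simpa [List.mem_ofFn] using fun i => hAC (s i))
  calc N (List.ofFn fun i => A (s i)).prod ^ ((1 : ℝ) / k) ≤ (C ^ k) ^ ((1 : ℝ) / k) :=
        Real.rpow_le_rpow (hnonneg _) hprod (by positivity)
  _ = C := by rw [one_div, Real.pow_rpow_inv_natCast hC hk]

theorem isBoundedUnder_le_jsrApprox [Finite ι] (hnonneg : ∀ a, 0 ≤ N a)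
    (hsub : ∀ a b, N (a * b) ≤ N a * N b) : IsBoundedUnder (· ≤ ·) atTop (jsrApprox N A) := by
  obtain ⟨C, hC⟩ := (Set.finite_range fun i => N (A i)).bddAbove
  refine isBoundedUnder_of_eventually_le (a := max C 0) ?_
  filter_upwards [eventually_ne_atTop 0] with k hk
  exact jsrApprox_le hnonneg hsub (le_max_right _ _)
    (fun i => (hC ⟨i, rfl⟩).trans (le_max_left _ _)) hk

theorem apply_prod_map_le_jsrApprox_pow [Finite ι] (hnonneg : ∀ a, 0 ≤ N a) {w : List ι}
    (hw : w ≠ []) : N (w.map A).prod ≤ jsrApprox N A w.length ^ w.length := by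
  have hk : w.length ≠ 0 := by simpa using hw
  have hroot : N (w.map A).prod ^ ((w.length : ℝ)⁻¹) ≤ jsrApprox N A w.length := by
    simpa [jsrApprox, List.ofFn_getElem_eq_map] using
      le_ciSup (Set.finite_range fun s : Fin w.length → ι =>
        N (List.ofFn fun i => A (s i)).prod ^ ((1 : ℝ) / w.length)).bddAbove w.get
  calc N (w.map A).prod = (N (w.map A).prod ^ ((w.length : ℝ)⁻¹)) ^ w.length :=
        (Real.rpow_inv_natCast_pow (hnonneg _) hk).symm
  _ ≤ jsrApprox N A w.length ^ w.length :=
        pow_le_pow_left₀ (Real.rpow_nonneg (hnonneg _) _) hroot _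

theorem tendsto_apply_prod_map_of_limsup_jsrApprox_lt_one [Finite ι] (hnonneg : ∀ a, 0 ≤ N a)
    (hsub : ∀ a b, N (a * b) ≤ N a * N b) (hρ : limsup (jsrApprox N A) atTop < 1)
    (w : ℕ → List ι) (hw : ∀ k, (w k).length = k) :
    Tendsto (fun k => N ((w k).map A).prod) atTop (𝓝 0) := by
  obtain ⟨r, hρr, hr1⟩ := exists_between hρ
  have hev : ∀ᶠ k in atTop, jsrApprox N A k < r :=
    eventually_lt_of_limsup_lt hρr (isBoundedUnder_le_jsrApprox hnonneg hsub)
  have hr0 : 0 ≤ r := by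
    obtain ⟨k, hk⟩ := hev.exists
    exact (jsrApprox_nonneg hnonneg k).trans hk.le
  have hbound : ∀ᶠ k in atTop, N ((w k).map A).prod ≤ r ^ k := by
    filter_upwards [hev, eventually_ne_atTop 0] with k hk hk0
    have hwk : w k ≠ [] := by simpa [← List.length_eq_zero_iff, hw k] using hk0
    calc N ((w k).map A).prod ≤ jsrApprox N A k ^ k := by
          simpa [hw k] using apply_prod_map_le_jsrApprox_pow hnonneg (A := A) hwk
    _ ≤ r ^ k := pow_le_pow_left₀ (jsrApprox_nonneg hnonneg k) hk.le k
  exact squeeze_zero' (Eventually.of_forall fun k => hnonneg _) hbound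
    (tendsto_pow_atTop_nhds_zero_of_lt_one hr0 hr1)

end JointSpectralRadius

theorem switched_system_stable_of_jsr_lt_one_general {n M : ℕ}
    (A : Fin M → Matrix (Fin n) (Fin n) ℝ)
    (N : Matrix (Fin n) (Fin n) ℝ → ℝ)
    (hnonneg : ∀ B, 0 ≤ N B)
    (hdef : ∀ B, N B = 0 ↔ B = 0)
    (htri : ∀ B C, N (B + C) ≤ N B + N C)
    (hhom : ∀ (c : ℝ) (B), N (c • B) = |c| * N B)
    (hsub : ∀ B C, N (B * C) ≤ N B * N C)
    (hρ : Filter.atTop.limsup (fun k : ℕ =>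
        ⨆ s : Fin k → Fin M, N ((List.ofFn fun i => A (s i)).prod) ^ ((1 : ℝ) / k)) < 1) :
    ∀ (x0 : Fin n → ℝ) (σ : ℕ → Fin M),
      Filter.Tendsto
        (fun k : ℕ => ((List.ofFn fun i : Fin k => A (σ i)).reverse.prod).mulVec x0)
        Filter.atTop (nhds 0) := by
  intro x0 σ
  have hnorm : Tendsto (fun k => N (List.ofFn fun i : Fin k => A (σ i)).reverse.prod) atTop
      (𝓝 0) := by
    simpa [List.map_reverse, List.map_ofFn, Function.comp_def] using
      tendsto_apply_prod_map_of_limsup_jsrApprox_lt_one hnonneg hsub hρ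
        (fun k => (List.ofFn fun i : Fin k => σ i).reverse) (by simp)
  have hprod := tendsto_zero_of_tendsto_norm_zero N hnonneg hdef htri hhom hnorm
  have hmulVec : Tendsto (fun B : Matrix (Fin n) (Fin n) ℝ => B.mulVec x0) (𝓝 0) (𝓝 0) := by
    simpa using
      (continuous_id.matrix_mulVec continuous_const).tendsto (0 : Matrix (Fin n) (Fin n) ℝ)
  exact hmulVec.comp hprod

/-- If the joint spectral radius is less than one, then every trajectory of the
switched linear system `x_{k+1} = A_{σ(k)} x_k` converges to zero, for every
initial condition and every switching signal. -/
theorem switched_system_stable_of_jsr_lt_one {n M : ℕ} (hM : 0 < M)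
    (A : Fin M → Matrix (Fin n) (Fin n) ℝ)
    (N : Matrix (Fin n) (Fin n) ℝ → ℝ)
    (hnonneg : ∀ B, 0 ≤ N B)
    (hdef : ∀ B, N B = 0 ↔ B = 0)
    (htri : ∀ B C, N (B + C) ≤ N B + N C)
    (hhom : ∀ (c : ℝ) (B), N (c • B) = |c| * N B)
    (hsub : ∀ B C, N (B * C) ≤ N B * N C)
    (hρ : Filter.atTop.limsup (fun k : ℕ =>
        ⨆ s : Fin k → Fin M, N ((List.ofFn fun i => A (s i)).prod) ^ ((1 : ℝ) / k)) < 1) :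
    ∀ (x0 : Fin n → ℝ) (σ : ℕ → Fin M),
      Filter.Tendsto
        (fun k : ℕ => ((List.ofFn fun i : Fin k => A (σ i)).reverse.prod).mulVec x0)
        Filter.atTop (nhds 0) :=
  switched_system_stable_of_jsr_lt_one_general A N hnonneg hdef htri hhom hsub hρ
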